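/- arXiv:0910.3630 — 3 statements merged into one kernel-verified Lean document; each statement's English description precedes it below -/
import Mathlib

section
/- Let ψ₁(r) = c·(1+r²)^{-5/4} for r ≥ 0 with c > 0. Then the radial Laplacian of ψ₁, namely Δψ₁(r) = ψ₁''(r) + (2/r)ψ₁'(r), satisfies Δψ₁ = G'(ψ₁²)·ψ₁ where G'(s) = (15/(4c^{4/5}))·s^{2/5} − (45/(4c^{8/5}))·s^{4/5}. -/
/-!
Both sides are computed in closed form. For `ψ = c (1 + r²)^p` and `A = 1 + r²`, substituting
`r² = A - 1` turns the radial Laplacian into `ψ · (2p(2p+1)/A - 4p(p-1)/A²)`, while for `c > 0`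
the powers `(ψ²)^{2/5}` and `(ψ²)^{4/5}` equal `c^{4/5}/A` and `c^{8/5}/A²` when `p = -5/4`.
At that exponent `2p(2p+1) = 15/4` and `4p(p-1) = 45/4`, which are the coefficients of `G'`.
-/

open Real

noncomputable def radialLaplacian (ψ : ℝ → ℝ) (r : ℝ) : ℝ :=
  deriv (deriv ψ) r + 2 / r * deriv ψ r

section PowerLawProfile

variable (c p : ℝ)

lemma hasDerivAt_one_add_sq_rpow (x : ℝ) :
    HasDerivAt (fun r : ℝ => (1 + r ^ 2) ^ p) (2 * p * (x * (1 + x ^ 2) ^ (p - 1))) x := by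
  have hA : 1 + x ^ 2 ≠ 0 := by positivity
  convert ((hasDerivAt_pow 2 x).const_add 1).rpow_const (p := p) (Or.inl hA) using 1
  push_cast
  ring

lemma deriv_const_mul_one_add_sq_rpow :
    deriv (fun r : ℝ => c * (1 + r ^ 2) ^ p) =
      fun x => c * (2 * p * (x * (1 + x ^ 2) ^ (p - 1))) :=
  funext fun x => ((hasDerivAt_one_add_sq_rpow p x).const_mul c).deriv

lemma deriv_deriv_const_mul_one_add_sq_rpow (x : ℝ) :
    deriv (deriv fun r : ℝ => c * (1 + r ^ 2) ^ p) x =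
      2 * p * c * ((1 + x ^ 2) ^ (p - 1) + 2 * (p - 1) * x ^ 2 * (1 + x ^ 2) ^ (p - 2)) := by
  have hx : HasDerivAt (fun r : ℝ => r * (1 + r ^ 2) ^ (p - 1))
      (1 * (1 + x ^ 2) ^ (p - 1) + x * (2 * (p - 1) * (x * (1 + x ^ 2) ^ (p - 1 - 1)))) x :=
    (hasDerivAt_id x).mul (hasDerivAt_one_add_sq_rpow (p - 1) x)
  rw [deriv_const_mul_one_add_sq_rpow, ((hx.const_mul (2 * p)).const_mul c).deriv,
    show p - 1 - 1 = p - 2 by ring]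
  ring

lemma radialLaplacian_const_mul_one_add_sq_rpow {r : ℝ} (hr : r ≠ 0) :
    radialLaplacian (fun r => c * (1 + r ^ 2) ^ p) r =
      c * (1 + r ^ 2) ^ p *
        (2 * p * (2 * p + 1) / (1 + r ^ 2) - 4 * p * (p - 1) / (1 + r ^ 2) ^ 2) := by
  have hA : 0 < 1 + r ^ 2 := by positivity
  have hr2 : r ^ 2 = (1 + r ^ 2) - 1 := by ring
  rw [radialLaplacian, deriv_deriv_const_mul_one_add_sq_rpow, deriv_const_mul_one_add_sq_rpow]
  simp only [rpow_sub hA, rpow_one, rpow_two]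
  field_simp
  rw [hr2]
  ring

end PowerLawProfile

lemma sq_const_mul_rpow_rpow {c A : ℝ} (hc : 0 ≤ c) (hA : 0 ≤ A) (p q : ℝ) :
    ((c * A ^ p) ^ 2) ^ q = c ^ (2 * q) * A ^ (2 * p * q) := by
  rw [mul_pow, ← rpow_natCast (A ^ p), ← rpow_mul hA, mul_rpow (by positivity) (by positivity),
    ← rpow_natCast c, ← rpow_mul hc, ← rpow_mul hA]
  push_cast
  ring_nf

/-- Example 1: the power-law form factor `ψ₁(r) = c (1+r²)^{-5/4}` satisfies the charge
equilibrium equation `Δψ₁ = G'(ψ₁²) ψ₁` with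
`G'(s) = (15/(4 c^{4/5})) s^{2/5} − (45/(4 c^{8/5})) s^{4/5}`, where `Δ` is the radial
three-dimensional Laplacian `Δψ(r) = ψ''(r) + (2/r) ψ'(r)`. -/
theorem stmt_0 (c : ℝ) (hc : 0 < c) (ψ : ℝ → ℝ)
    (hψ : ∀ r : ℝ, ψ r = c * (1 + r ^ 2) ^ (-(5 : ℝ) / 4))
    (G' : ℝ → ℝ)
    (hG : ∀ s : ℝ, G' s =
      15 / (4 * c ^ ((4 : ℝ) / 5)) * s ^ ((2 : ℝ) / 5)
        - 45 / (4 * c ^ ((8 : ℝ) / 5)) * s ^ ((4 : ℝ) / 5)) :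
    ∀ r : ℝ, 0 < r →
      deriv (deriv ψ) r + (2 / r) * deriv ψ r = G' (ψ r ^ 2) * ψ r := by
  intro r hr
  obtain rfl : ψ = fun r => c * (1 + r ^ 2) ^ (-(5 : ℝ) / 4) := funext hψ
  have hA : 0 < 1 + r ^ 2 := by positivity
  have hG' : G' ((c * (1 + r ^ 2) ^ (-(5 : ℝ) / 4)) ^ 2) =
      15 / 4 / (1 + r ^ 2) - 45 / 4 / (1 + r ^ 2) ^ 2 := by
    rw [hG, sq_const_mul_rpow_rpow hc.le hA.le, sq_const_mul_rpow_rpow hc.le hA.le]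
    norm_num [rpow_neg hA.le, rpow_two]
    field_simp
  refine (radialLaplacian_const_mul_one_add_sq_rpow c _ hr.ne').trans ?_
  rw [hG']
  ring
end

section
/- Suppose G: (0,∞) → ℝ is differentiable and satisfies the ODE s·G'(s) − G(s) = K·s for all s > 0, for a constant K. Then there exists a constant C such that G(s) = K·s·ln s + C·s for all s > 0. -/
/-! Dividing by `s` turns the equation into `(G(s) / s)' = K / s`, so `G(s) / s - K ln s` has
vanishing derivative on the connected set `(0, ∞)` and is therefore a constant `C`. -/

open Real Set

theorem hasDerivAt_div_sub_mul_log {G : ℝ → ℝ} {g K s : ℝ} (hG : HasDerivAt G g s)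
    (hs : s ≠ 0) :
    HasDerivAt (fun t => G t / t - K * log t) ((s * g - G s - K * s) / s ^ 2) s :=
  ((hG.fun_div (hasDerivAt_id' s) hs).fun_sub
    ((hasDerivAt_log hs).const_mul K)).congr_deriv (by field_simp)

/-- If `G : (0,∞) → ℝ` is differentiable and satisfies `s G'(s) − G(s) = K s` for all
`s > 0`, then there is a constant `C` with `G(s) = K s ln s + C s` for all `s > 0`. -/
theorem stmt_4 (G : ℝ → ℝ) (K : ℝ)
    (hdiff : ∀ s : ℝ, 0 < s → DifferentiableAt ℝ G s)
    (hode : ∀ s : ℝ, 0 < s → s * deriv G s - G s = K * s) :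
    ∃ C : ℝ, ∀ s : ℝ, 0 < s → G s = K * s * Real.log s + C * s := by
  have hzero : ∀ s ∈ Ioi (0 : ℝ), HasDerivAt (fun t => G t / t - K * log t) 0 s := by
    intro s (hs : 0 < s)
    simpa [hode s hs] using hasDerivAt_div_sub_mul_log (K := K) (hdiff s hs).hasDerivAt hs.ne'
  obtain ⟨C, hC⟩ := isOpen_Ioi.exists_is_const_of_deriv_eq_zero isPreconnected_Ioi
    (fun s hs => (hzero s hs).differentiableAt.differentiableWithinAt)
    (fun s hs => (hzero s hs).deriv)
  refine ⟨C, fun s hs => ?_⟩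
  have hCs : G s / s - K * log s = C := hC s hs
  field_simp at hCs
  linarith
end

section
/- Let O be a self-adjoint operator on a Hilbert space H, let ω ∈ ℝ, and suppose Ψ ∈ dom(O) with ‖Ψ‖ = 1 satisfies (O − ω)Ψ = g. Let Π be the spectral projection of O corresponding to (−∞, λ₋] and suppose the spectrum of O in (λ₋, λ₊) is empty, with λ₋ + δ < ω < λ₊ − δ for some δ > 0. Then δ ≤ ⟨g, (1−Π)Ψ⟩/‖(1−Π)Ψ‖² whenever (1−Π)Ψ ≠ 0, and δ·‖ΠΨ‖² ≤ ‖Πg‖·‖ΠΨ‖; consequently δ ≤ max(|⟨g, Ψ⟩| + ‖Πg‖, 2‖Πg‖) ≤ |⟨g,Ψ⟩| + 2‖Πg‖. -/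
open RealInnerProductSpace

/-- Abstract spectral-gap estimate underlying Theorem 5.8: let `O` be a self-adjoint
(bounded) operator on a real Hilbert space `H`, `P` a self-adjoint idempotent commuting
with `O` which is the spectral projection of `O` onto `(−∞, λ₋]` — encoded by the
quadratic-form bounds `⟪O Px, Px⟫ ≤ λ₋ ‖Px‖²` and `λ₊ ‖(1−P)x‖² ≤ ⟪O (1−P)x, (1−P)x⟫`
expressing that `O` has no spectrum in `(λ₋, λ₊)`. If `‖Ψ‖ = 1` satisfies
`(O − ω)Ψ = g` with `λ₋ + δ < ω < λ₊ − δ`, `δ > 0`, then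
`δ ≤ ⟪g, (1−P)Ψ⟫/‖(1−P)Ψ‖²` (when `(1−P)Ψ ≠ 0`), `δ ‖PΨ‖² ≤ ‖Pg‖ ‖PΨ‖`, and
consequently `δ ≤ |⟪g, Ψ⟫| + 2‖Pg‖`. -/
theorem stmt_19 {H : Type*} [NormedAddCommGroup H] [InnerProductSpace ℝ H]
    [CompleteSpace H]
    (O P : H →L[ℝ] H) (hO : IsSelfAdjoint O) (hP : IsSelfAdjoint P)
    (hidem : P ∘L P = P) (hcomm : O ∘L P = P ∘L O)
    (lm lp ω δ : ℝ) (hδ : 0 < δ)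
    (hlow : ∀ x : H, ⟪O (P x), P x⟫ ≤ lm * ‖P x‖ ^ 2)
    (hhigh : ∀ x : H, lp * ‖x - P x‖ ^ 2 ≤ ⟪O (x - P x), x - P x⟫)
    (hω₁ : lm + δ < ω) (hω₂ : ω < lp - δ)
    (Ψ g : H) (hΨ : ‖Ψ‖ = 1) (heq : O Ψ - ω • Ψ = g) :
    (Ψ - P Ψ ≠ 0 → δ ≤ ⟪g, Ψ - P Ψ⟫ / ‖Ψ - P Ψ‖ ^ 2) ∧
    δ * ‖P Ψ‖ ^ 2 ≤ ‖P g‖ * ‖P Ψ‖ ∧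
    δ ≤ |⟪g, Ψ⟫| + 2 * ‖P g‖ := by
  have hPsymm : ∀ x y : H, ⟪P x, y⟫ = ⟪x, P y⟫ :=
    (ContinuousLinearMap.isSelfAdjoint_iff_isSymmetric.mp hP)
  have hOsymm : ∀ x y : H, ⟪O x, y⟫ = ⟪x, O y⟫ :=
    (ContinuousLinearMap.isSelfAdjoint_iff_isSymmetric.mp hO)
  set u := P Ψ with hu
  set v := Ψ - P Ψ with hv
  have hPP : ∀ x : H, P (P x) = P x := fun x => ContinuousLinearMap.ext_iff.mp hidem x
  have hOP : ∀ x : H, O (P x) = P (O x) := fun x => ContinuousLinearMap.ext_iff.mp hcomm x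
  have hPv : P v = 0 := by simp [hv, map_sub, hPP]
  have huv : ⟪u, v⟫ = 0 := by rw [hu, hPsymm, hPv, inner_zero_right]
  have hΨuv : Ψ = u + v := by simp [hu, hv]
  have hinΨv : ⟪Ψ, v⟫ = ‖v‖ ^ 2 := by
    rw [hΨuv, inner_add_left, huv, real_inner_self_eq_norm_sq]; ring
  have hgval : ∀ y : H, ⟪g, y⟫ = ⟪O Ψ, y⟫ - ω * ⟪Ψ, y⟫ := by
    intro y
    rw [← heq, inner_sub_left, real_inner_smul_left]
  have hOΨv : ⟪O Ψ, v⟫ = ⟪O v, v⟫ := by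
    have h1 : ⟪O u, v⟫ = 0 := by rw [hu, hOP, hPsymm, hPv, inner_zero_right]
    calc ⟪O Ψ, v⟫ = ⟪O u, v⟫ + ⟪O v, v⟫ := by
            rw [hΨuv, map_add, inner_add_left]
      _ = ⟪O v, v⟫ := by rw [h1]; ring
  have key1 : δ * ‖v‖ ^ 2 ≤ ⟪g, v⟫ := by
    have h2 := hhigh Ψ
    have h3 : ⟪g, v⟫ = ⟪O v, v⟫ - ω * ‖v‖ ^ 2 := by
      rw [hgval, hOΨv, hinΨv]
    nlinarith [sq_nonneg ‖v‖]
  have hPu : P u = u := hPP Ψ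
  have hvu : ⟪v, u⟫ = 0 := by rw [real_inner_comm]; exact huv
  have hOΨu : ⟪O Ψ, u⟫ = ⟪O u, u⟫ := by
    have h1 : O u = P (O u) := by rw [hu, hOP, hPP]
    calc ⟪O Ψ, u⟫ = ⟪Ψ, O u⟫ := hOsymm _ _
      _ = ⟪Ψ, P (O u)⟫ := by rw [← h1]
      _ = ⟪P Ψ, O u⟫ := (hPsymm Ψ (O u)).symm
      _ = ⟪O u, u⟫ := by rw [← hu, real_inner_comm]
  have hinΨu : ⟪Ψ, u⟫ = ‖u‖ ^ 2 := by
    rw [hΨuv, inner_add_left, hvu, real_inner_self_eq_norm_sq]; ring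
  have hPgu : ⟪P g, u⟫ = ⟪g, u⟫ := by rw [hPsymm, hPu]
  have key2 : δ * ‖u‖ ^ 2 ≤ ‖P g‖ * ‖u‖ := by
    have h2 := hlow Ψ
    have h3 : ⟪g, u⟫ = ⟪O u, u⟫ - ω * ‖u‖ ^ 2 := by
      rw [hgval, hOΨu, hinΨu]
    have h4 : ⟪P g, u⟫ ≤ -(δ * ‖u‖ ^ 2) := by
      rw [hPgu, h3]; nlinarith [sq_nonneg ‖u‖]
    have h5 : -(‖P g‖ * ‖u‖) ≤ ⟪P g, u⟫ := neg_le_of_abs_le (abs_real_inner_le_norm _ _)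
    linarith
  refine ⟨?_, key2, ?_⟩
  · intro hvne
    have hvpos : (0:ℝ) < ‖v‖ ^ 2 := pow_pos (norm_pos_iff.mpr hvne) 2
    rw [le_div_iff₀ hvpos]
    linarith [key1]
  · have hnorm : ‖u‖ ^ 2 + ‖v‖ ^ 2 = 1 := by
      have := norm_add_sq_real u v
      rw [← hΨuv, hΨ, huv] at this
      nlinarith
    have hu1 : ‖u‖ ≤ 1 := by nlinarith [sq_nonneg ‖v‖, norm_nonneg u]
    have hgu : ⟪g, u⟫ = ⟪P g, Ψ⟫ := by rw [hu, ← hPsymm, real_inner_comm]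
    have hgv : ⟪g, v⟫ = ⟪g, Ψ⟫ - ⟪P g, Ψ⟫ := by
      rw [hv, inner_sub_right, ← hgu]
    have hb1 : |⟪P g, Ψ⟫| ≤ ‖P g‖ := by
      have := abs_real_inner_le_norm (P g) Ψ
      rwa [hΨ, mul_one] at this
    have hb2 : ⟪g, Ψ⟫ ≤ |⟪g, Ψ⟫| := le_abs_self _
    have hb3 : -‖P g‖ ≤ ⟪P g, Ψ⟫ := (abs_le.mp hb1).1
    have hPgnn : (0:ℝ) ≤ ‖P g‖ := norm_nonneg _
    have e1 : δ * ‖v‖ ^ 2 ≤ |⟪g, Ψ⟫| + ‖P g‖ := by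
      rw [hgv] at key1; linarith
    have e2 : δ * ‖u‖ ^ 2 ≤ ‖P g‖ := by
      have h := mul_le_mul_of_nonneg_left hu1 hPgnn
      rw [mul_one] at h
      linarith
    have e3 : δ * ‖u‖ ^ 2 + δ * ‖v‖ ^ 2 = δ := by rw [← mul_add, hnorm, mul_one]
    linarith
end
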